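/- Define g(ρ) = ((1+ρ)/2)·log(1+ρ) − ρ·log ρ − (1 − ρ/2)·log(2−ρ) for ρ ∈ (0,1). Then g has a unique root ρ* in (0,1), and g(ρ) < 0 for ρ < ρ* while g(ρ) > 0 for ρ > ρ*, with ρ* ∈ (0.25, 0.26). -/

import Mathlib

/-!
The derivative of `g` is `(log (1 + ρ) + log (2 - ρ) - 2 log ρ) / 2`, which is positive on `(0, 1)`
because `ρ² < (1 + ρ)(2 - ρ)` there; so `g` is strictly increasing and has at most one root, and
the sign pattern around it is forced. At rational points `g` is a logarithm of a ratio of integer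
powers, and comparing these integers gives `g (1/4) < 0 < g (13/50)`, so the intermediate value
theorem places the root in `(1/4, 13/50)`.
-/

open Real Set

noncomputable def expansionExponent (ρ : ℝ) : ℝ :=
  ((1 + ρ) / 2) * log (1 + ρ) - ρ * log ρ - (1 - ρ / 2) * log (2 - ρ)

lemma hasDerivAt_expansionExponent {x : ℝ} (hx0 : 0 < x) (hx2 : x < 2) :
    HasDerivAt expansionExponent ((log (1 + x) + log (2 - x) - 2 * log x) / 2) x := by
  have h1 : HasDerivAt (fun y => 1 + y) 1 x := (hasDerivAt_id' x).const_add 1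
  have h2 : HasDerivAt (fun y => 2 - y) (-1) x := (hasDerivAt_id' x).const_sub 2
  have h : HasDerivAt expansionExponent
      (1 / 2 * log (1 + x) + (1 + x) / 2 * (1 / (1 + x)) - (1 * log x + x * (1 / x))
        - (-(1 / 2) * log (2 - x) + (1 - x / 2) * (-1 / (2 - x)))) x :=
    (((h1.div_const 2).mul (h1.log (by linarith))).sub
      ((hasDerivAt_id' x).mul ((hasDerivAt_id' x).log hx0.ne'))).sub
      ((((hasDerivAt_id' x).div_const 2).const_sub 1).mul (h2.log (by linarith)))
  have h1x : 1 + x ≠ 0 := by linarith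
  have h2x : 2 - x ≠ 0 := by linarith
  convert h using 1
  field_simp
  ring

lemma continuousOn_expansionExponent : ContinuousOn expansionExponent (Ioo (0 : ℝ) 2) :=
  fun _ hx => (hasDerivAt_expansionExponent hx.1 hx.2).continuousAt.continuousWithinAt

lemma strictMonoOn_expansionExponent : StrictMonoOn expansionExponent (Ioo (0 : ℝ) 1) := by
  refine strictMonoOn_of_deriv_pos (convex_Ioo 0 1)
    (continuousOn_expansionExponent.mono (Ioo_subset_Ioo_right one_le_two)) ?_
  rw [interior_Ioo]
  rintro x ⟨hx0, hx1⟩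
  rw [(hasDerivAt_expansionExponent hx0 (by linarith)).deriv]
  have hprod : log (x ^ 2) < log ((1 + x) * (2 - x)) :=
    log_lt_log (by positivity) (by nlinarith)
  rw [log_mul (by linarith) (by linarith), log_pow] at hprod
  push_cast at hprod
  linarith

lemma two_mul_mul_expansionExponent_div {a n : ℕ} (ha : 0 < a) (han : a < 2 * n) :
    2 * n * expansionExponent (a / n) =
      log ((n + a) ^ (n + a) * n ^ n : ℕ)
        - log (a ^ (2 * a) * (2 * n - a) ^ (2 * n - a) : ℕ) := by
  have hn : (0 : ℝ) < n := by exact_mod_cast (show 0 < n by omega)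
  have hn0 : (n : ℝ) ≠ 0 := hn.ne'
  have ha' : (0 : ℝ) < a := by exact_mod_cast ha
  have hsub : ((2 * n - a : ℕ) : ℝ) = 2 * n - a := by push_cast [han.le]; ring
  have hsub_pos : (0 : ℝ) < 2 * n - a := by
    rw [← hsub]; exact_mod_cast (show 0 < 2 * n - a by omega)
  simp only [Nat.cast_mul, Nat.cast_pow, hsub]
  rw [log_mul (by positivity) (by positivity), log_mul (by positivity) (pow_pos hsub_pos _).ne',
    log_pow, log_pow, log_pow, log_pow, hsub]
  unfold expansionExponent
  rw [show 1 + (a : ℝ) / n = (n + a) / n by field_simp,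
    show 2 - (a : ℝ) / n = (2 * n - a) / n by field_simp,
    log_div (by positivity) hn0, log_div ha'.ne' hn0, log_div hsub_pos.ne' hn0]
  push_cast
  field_simp
  ring

lemma expansionExponent_one_div_four_neg : expansionExponent (1 / 4) < 0 := by
  have h := two_mul_mul_expansionExponent_div (a := 1) (n := 4) (by norm_num) (by norm_num)
  have hlt : log ((4 + 1) ^ (4 + 1) * 4 ^ 4 : ℕ)
      < log (1 ^ (2 * 1) * (2 * 4 - 1) ^ (2 * 4 - 1) : ℕ) :=
    log_lt_log (by norm_num) (by norm_num)
  push_cast at h hlt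
  linarith

lemma expansionExponent_thirteen_div_fifty_pos : 0 < expansionExponent (13 / 50) := by
  have h := two_mul_mul_expansionExponent_div (a := 13) (n := 50) (by norm_num) (by norm_num)
  have hlt : log (13 ^ (2 * 13) * (2 * 50 - 13) ^ (2 * 50 - 13) : ℕ)
      < log ((50 + 13) ^ (50 + 13) * 50 ^ 50 : ℕ) :=
    log_lt_log (by norm_num) (by norm_num)
  push_cast at h hlt
  linarith

theorem stmt_7 :
    ∃ ρs : ℝ, ρs ∈ Set.Ioo (0:ℝ) 1 ∧
      (fun ρ : ℝ => ((1+ρ)/2) * Real.log (1+ρ) - ρ * Real.log ρ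
          - (1-ρ/2) * Real.log (2-ρ)) ρs = 0 ∧
      (∀ ρ ∈ Set.Ioo (0:ℝ) 1,
        ((1+ρ)/2) * Real.log (1+ρ) - ρ * Real.log ρ - (1-ρ/2) * Real.log (2-ρ) = 0 → ρ = ρs) ∧
      (∀ ρ ∈ Set.Ioo (0:ℝ) 1, ρ < ρs →
        ((1+ρ)/2) * Real.log (1+ρ) - ρ * Real.log ρ - (1-ρ/2) * Real.log (2-ρ) < 0) ∧
      (∀ ρ ∈ Set.Ioo (0:ℝ) 1, ρs < ρ →
        0 < ((1+ρ)/2) * Real.log (1+ρ) - ρ * Real.log ρ - (1-ρ/2) * Real.log (2-ρ)) ∧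
      0.25 < ρs ∧ ρs < 0.26 := by
  have hmono := strictMonoOn_expansionExponent
  have hIcc : Icc (1 / 4 : ℝ) (13 / 50) ⊆ Ioo 0 1 :=
    fun x hx => ⟨by linarith [hx.1], by linarith [hx.2]⟩
  obtain ⟨ρs, ⟨hlo, hhi⟩, hroot⟩ :=
    intermediate_value_Ioo (by norm_num : (1 / 4 : ℝ) ≤ 13 / 50)
      (continuousOn_expansionExponent.mono (hIcc.trans (Ioo_subset_Ioo_right one_le_two)))
      ⟨expansionExponent_one_div_four_neg, expansionExponent_thirteen_div_fifty_pos⟩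
  have hρs : ρs ∈ Ioo (0 : ℝ) 1 := hIcc ⟨hlo.le, hhi.le⟩
  refine ⟨ρs, hρs, hroot, fun ρ hρ h => hmono.injOn hρ hρs (h.trans hroot.symm),
    fun ρ hρ h => hroot ▸ hmono hρ hρs h, fun ρ hρ h => hroot ▸ hmono hρs hρ h,
    by norm_num; linarith, by norm_num; linarith⟩
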